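/- For any two functions h, h' : [n] → {0,1}, Δ⁻(sort(h), sort(h')) ≤ Δ⁻(h, h'), where Δ⁻(h,h') := |{c ∈ [n] : h(c) > h'(c)}| and sort is the sort operator on Boolean functions on [n]. -/

import Mathlib

open scoped Classical

noncomputable section

/-- The sort operator on Boolean functions on the line `[n]`:
`sort h` has value `1` exactly at the top `‖h‖₁` positions. -/
def sortLine {n : ℕ} (h : Fin n → Bool) : Fin n → Bool :=
  fun b => decide (n - ((Finset.univ.filter (fun c : Fin n => h c = true)).card) ≤ (b : ℕ))

/-- `Δ⁻(h,h')`: the number of positions `c` where `h c > h' c`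
(i.e. `h c = 1` and `h' c = 0`). -/
def deltaMinus {n : ℕ} (h h' : Fin n → Bool) : ℕ :=
  (Finset.univ.filter (fun c : Fin n => h c = true ∧ h' c = false)).card

/-! Sorting makes the positive parts of `h` and `h'` nested intervals `[n - ‖h‖₁, n)`, so after
sorting `Δ⁻` is at most `‖h‖₁ - ‖h'‖₁`; and `‖h‖₁ - ‖h'‖₁ ≤ Δ⁻(h, h')` for any `h, h'`. -/

namespace SortLine

open Finset

variable {n : ℕ}

def support (h : Fin n → Bool) : Finset (Fin n) :=
  univ.filter (fun c => h c = true)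

def weight (h : Fin n → Bool) : ℕ :=
  #(support h)

theorem weight_le (h : Fin n → Bool) : weight h ≤ n :=
  (card_le_univ _).trans_eq (Fintype.card_fin n)

theorem sortLine_eq_true_iff (h : Fin n → Bool) (b : Fin n) :
    sortLine h b = true ↔ n - weight h ≤ b := by
  simp [sortLine, weight, support]

theorem deltaMinus_eq_card_sdiff (h h' : Fin n → Bool) :
    deltaMinus h h' = #(support h \ support h') := by
  unfold deltaMinus support
  congr 1
  ext c
  simp

theorem weight_sub_weight_le_deltaMinus (h h' : Fin n → Bool) :
    weight h - weight h' ≤ deltaMinus h h' := by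
  rw [deltaMinus_eq_card_sdiff]
  exact le_card_sdiff _ _

theorem deltaMinus_sortLine_le (h h' : Fin n → Bool) :
    deltaMinus (sortLine h) (sortLine h') ≤ weight h - weight h' := by
  have hrange : ∀ c ∈ support (sortLine h) \ support (sortLine h'),
      (c : ℕ) ∈ Ico (n - weight h) (n - weight h') := by
    intro c hc
    simp only [support, mem_sdiff, mem_filter, mem_univ, true_and, sortLine_eq_true_iff] at hc
    exact mem_Ico.2 ⟨hc.1, not_le.1 hc.2⟩
  calc deltaMinus (sortLine h) (sortLine h')
      = #(support (sortLine h) \ support (sortLine h')) := deltaMinus_eq_card_sdiff _ _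
    _ ≤ #(Ico (n - weight h) (n - weight h')) :=
        card_le_card_of_injOn Fin.val hrange Fin.val_injective.injOn
    _ = weight h - weight h' := by
        have := weight_le h
        rw [Nat.card_Ico]
        omega

end SortLine

/-- sorting can only decrease `Δ⁻`. -/
theorem sortLine_deltaMinus_le {n : ℕ} (h h' : Fin n → Bool) :
    deltaMinus (sortLine h) (sortLine h') ≤ deltaMinus h h' :=
  (SortLine.deltaMinus_sortLine_le h h').trans (SortLine.weight_sub_weight_le_deltaMinus h h')
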